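/- Let R be an infinite integral domain and n ≥ 1 an integer. If f ∈ End_R(A^n) commutes (under composition) with every translation, then f is itself a translation. In other words, the group of translations is its own centraliser in End_R(A^n). -/

import Mathlib

open MvPolynomial

/-- Endomorphisms of affine `n`-space over `R`: `n`-tuples of polynomials in
`R[x_1,…,x_n]`, with composition given by substitution. -/
def PolyEnd (R : Type*) [CommRing R] (n : ℕ) : Type _ := Fin n → MvPolynomial (Fin n) R

namespace PolyEnd

variable {R S : Type*} [CommRing R] [CommRing S] {n : ℕ}

noncomputable instance : Monoid (PolyEnd R n) where
  one := fun i => X i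
  mul f g := fun i => bind₁ g (f i)
  mul_assoc f g h := funext fun i => by
    show bind₁ h (bind₁ g (f i)) = bind₁ (fun j => bind₁ h (g j)) (f i)
    exact bind₁_bind₁ g h (f i)
  one_mul f := funext fun i => by
    show bind₁ f (X i) = f i
    exact bind₁_X_right f i
  mul_one f := funext fun i => by
    show bind₁ X (f i) = f i
    rw [bind₁_X_left, AlgHom.id_apply]

@[simp] lemma mul_apply (f g : PolyEnd R n) (i : Fin n) :
    (f * g) i = bind₁ g (f i) := rfl

@[simp] lemma one_apply (i : Fin n) : (1 : PolyEnd R n) i = X i := rfl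

/-- The Jacobian determinant of an endomorphism. -/
noncomputable def jac (f : PolyEnd R n) : MvPolynomial (Fin n) R :=
  (Matrix.of fun i j => pderiv j (f i)).det

/-- The chain rule for partial derivatives of a substitution. -/
lemma pderiv_bind₁ (g : Fin n → MvPolynomial (Fin n) R)
    (p : MvPolynomial (Fin n) R) (j : Fin n) :
    pderiv j (bind₁ g p) = ∑ i, bind₁ g (pderiv i p) * pderiv j (g i) := by
  induction p using MvPolynomial.induction_on with
  | C a => simp
  | add p q hp hq => simp [hp, hq, Finset.sum_add_distrib, add_mul]
  | mul_X p i hp =>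
      rw [map_mul, bind₁_X_right, pderiv_mul, hp]
      have key : ∀ l : Fin n, bind₁ g (pderiv l (p * X i)) * pderiv j (g l)
          = bind₁ g (pderiv l p) * pderiv j (g l) * g i
            + (if l = i then bind₁ g p * pderiv j (g i) else 0) := by
        intro l
        rw [pderiv_mul, pderiv_X]
        by_cases h : l = i
        · subst h
          simp only [Pi.single_apply, if_pos rfl, map_add, map_mul, bind₁_X_right,
            bind₁_C_right, if_pos rfl]
          ring_nf
          simp [mul_comm, mul_left_comm, mul_assoc]
        · simp only [Pi.single_apply, if_neg (Ne.symm h), if_neg h, mul_zero, map_mul,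
            map_add, map_zero, add_zero, bind₁_X_right]
          ring
      rw [Finset.sum_congr rfl fun l _ => key l, Finset.sum_add_distrib]
      simp [Finset.sum_mul]

lemma jac_one : jac (1 : PolyEnd R n) = 1 := by
  unfold jac
  have : (Matrix.of fun i j => pderiv j ((1 : PolyEnd R n) i))
      = (1 : Matrix (Fin n) (Fin n) (MvPolynomial (Fin n) R)) := by
    ext i j
    simp [Matrix.one_apply, pderiv_X, Pi.single_apply, eq_comm]
  rw [this, Matrix.det_one]

/-- The chain rule for Jacobians. -/
lemma jac_mul (f g : PolyEnd R n) : jac (f * g) = bind₁ g (jac f) * jac g := by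
  unfold jac
  have : (Matrix.of fun i j => pderiv j ((f * g) i))
      = (Matrix.of fun i l => pderiv l (f i)).map (bind₁ g)
        * (Matrix.of fun l j => pderiv j (g l)) := by
    refine Matrix.ext fun i j => ?_
    rw [Matrix.mul_apply]
    exact pderiv_bind₁ g (f i) j
  rw [this, Matrix.det_mul]
  congr 1
  exact ((bind₁ g).map_det (Matrix.of fun i l => pderiv l (f i))).symm

end PolyEnd

/-- Automorphisms of affine `n`-space over `R` : endomorphisms admitting a two-sided
compositional inverse. -/
abbrev PolyAut (R : Type*) [CommRing R] (n : ℕ) := (PolyEnd R n)ˣ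

namespace PolyAut

variable {R S : Type*} [CommRing R] [CommRing S] {n : ℕ}

lemma bind₁_val_injective (f : PolyAut R n) :
    Function.Injective (bind₁ (σ := Fin n) (f.val : Fin n → MvPolynomial (Fin n) R)) := by
  intro p q h
  have hinv : ∀ r : MvPolynomial (Fin n) R, bind₁ (f.inv : Fin n → _) (bind₁ (f.val : Fin n → _) r) = r := by
    intro r
    have e : (fun i => bind₁ (f.inv : Fin n → _) ((f.val : Fin n → _) i))
        = (X : Fin n → MvPolynomial (Fin n) R) := f.val_inv
    calc bind₁ (f.inv : Fin n → _) (bind₁ (f.val : Fin n → _) r)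
        = bind₁ (fun i => bind₁ (f.inv : Fin n → _) ((f.val : Fin n → _) i)) r :=
          bind₁_bind₁ _ _ r
      _ = bind₁ (X : Fin n → MvPolynomial (Fin n) R) r := by rw [e]
      _ = r := by rw [bind₁_X_left, AlgHom.id_apply]
  calc p = bind₁ (f.inv : Fin n → _) (bind₁ (f.val : Fin n → _) p) := (hinv p).symm
    _ = bind₁ (f.inv : Fin n → _) (bind₁ (f.val : Fin n → _) q) := by rw [h]
    _ = q := hinv q

end PolyAut

/-- The subgroup of automorphisms of Jacobian `1`. -/
noncomputable def SAutGrp (R : Type*) [CommRing R] (n : ℕ) : Subgroup (PolyAut R n) where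
  carrier := {f | PolyEnd.jac f.val = 1}
  one_mem' := PolyEnd.jac_one
  mul_mem' := by
    intro f g hf hg
    show PolyEnd.jac (f.val * g.val) = 1
    rw [PolyEnd.jac_mul, hf, hg, map_one, one_mul]
  inv_mem' := by
    intro f hf
    show PolyEnd.jac f.inv = 1
    apply PolyAut.bind₁_val_injective f
    have h1 : PolyEnd.jac (f.inv * f.val) = 1 := by
      rw [f.inv_val]; exact PolyEnd.jac_one
    rw [PolyEnd.jac_mul, hf, mul_one] at h1
    rw [map_one]
    exact h1

lemma mem_SAutGrp_iff {R : Type*} [CommRing R] {n : ℕ} (f : PolyAut R n) :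
    f ∈ SAutGrp R n ↔ PolyEnd.jac f.val = 1 := Iff.rfl

section Translations

variable {R : Type*} [CommRing R] {n : ℕ}

/-- The translation endomorphism `(x_1 + c_1, …, x_n + c_n)`. -/
noncomputable def translEnd (c : Fin n → R) : PolyEnd R n := fun i => X i + C (c i)

lemma translEnd_mul (c d : Fin n → R) :
    translEnd c * translEnd d = translEnd (c + d) := by
  funext i
  show bind₁ (translEnd d) (translEnd c i) = translEnd (c + d) i
  simp only [translEnd, map_add, bind₁_C_right]
  rw [show bind₁ (translEnd d) (X i) = translEnd d i from bind₁_X_right _ i]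
  rw [show bind₁ (translEnd d) (C (c i)) = C (c i) from bind₁_C_right _ _]
  show X i + C (d i) + C (c i) = X i + C (c i + d i)
  rw [map_add]; ring

lemma translEnd_zero : translEnd (0 : Fin n → R) = 1 := by
  funext i
  show X i + C 0 = X i
  simp

/-- The translation automorphism `(x_1 + c_1, …, x_n + c_n)`. -/
noncomputable def transl (c : Fin n → R) : PolyAut R n where
  val := translEnd c
  inv := translEnd (-c)
  val_inv := by rw [translEnd_mul, add_neg_cancel, translEnd_zero]
  inv_val := by rw [translEnd_mul, neg_add_cancel, translEnd_zero]

@[simp] lemma transl_val (c : Fin n → R) : (transl c).val = translEnd c := rfl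

lemma jac_translEnd (c : Fin n → R) : PolyEnd.jac (translEnd c) = 1 := by
  unfold PolyEnd.jac
  have : (Matrix.of fun i j => pderiv j (translEnd c i))
      = (1 : Matrix (Fin n) (Fin n) (MvPolynomial (Fin n) R)) := by
    ext i j
    simp [translEnd, Matrix.one_apply, pderiv_X, Pi.single_apply, eq_comm]
  rw [this, Matrix.det_one]

lemma transl_mem_SAutGrp (c : Fin n → R) : transl c ∈ SAutGrp R n := jac_translEnd c

/-- The translation as element of `SAut`. -/
noncomputable def translS (c : Fin n → R) : ↥(SAutGrp R n) := ⟨transl c, transl_mem_SAutGrp c⟩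

/-- `f` is a translation. -/
def IsTranslation (f : PolyAut R n) : Prop := ∃ c : Fin n → R, f = transl c

end Translations

section Linear

variable {R : Type*} [CommRing R] {n : ℕ}

/-- The linear endomorphism associated with a matrix. -/
noncomputable def linEnd (M : Matrix (Fin n) (Fin n) R) : PolyEnd R n :=
  fun i => ∑ j, C (M i j) * X j

/-- `f` is a linear automorphism (i.e. in the image of `GL_n`). -/
def IsLinear (f : PolyAut R n) : Prop := ∃ M : Matrix (Fin n) (Fin n) R, f.val = linEnd M

/-- `f` is a linear automorphism given by a matrix of determinant 1
(i.e. in the image of `SL_n`). -/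
def MemSL (f : PolyAut R n) : Prop :=
  ∃ M : Matrix (Fin n) (Fin n) R, M.det = 1 ∧ f.val = linEnd M

/-- `f` is a triangular automorphism. -/
def IsTriangular (f : PolyAut R n) : Prop :=
  ∃ (a : Fin n → Rˣ) (b : Fin n → MvPolynomial (Fin n) R),
    (∀ i : Fin n, b i ∈ MvPolynomial.supported R {j : Fin n | (j : ℕ) < (i : ℕ)}) ∧
    ∀ i : Fin n, f.val i = C ((a i : R)) * X i + b i

/-- The tame subgroup, generated by linear and triangular automorphisms. -/
noncomputable def TameGrp (R : Type*) [CommRing R] (n : ℕ) : Subgroup (PolyAut R n) :=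
  Subgroup.closure {f | IsLinear f ∨ IsTriangular f}

end Linear

section Map

variable {R S : Type*} [CommRing R] [CommRing S] {n : ℕ}

/-- Applying a ring homomorphism to all coefficients, as a monoid homomorphism of
endomorphisms of affine `n`-space. -/
noncomputable def endMapHom (φ : R →+* S) : PolyEnd R n →* PolyEnd S n where
  toFun f := fun i => MvPolynomial.map φ (f i)
  map_one' := funext fun i => by
    show MvPolynomial.map φ (X i) = X i
    simp
  map_mul' f g := funext fun i => by
    show MvPolynomial.map φ (bind₁ g (f i)) = bind₁ (fun j => MvPolynomial.map φ (g j)) (MvPolynomial.map φ (f i))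
    exact map_bind₁ _ _ _

/-- Applying a ring homomorphism to all coefficients, on automorphisms. -/
noncomputable def autMap (φ : R →+* S) : PolyAut R n →* PolyAut S n :=
  Units.map (endMapHom φ)

lemma jac_endMapHom (φ : R →+* S) (f : PolyEnd R n) :
    PolyEnd.jac (endMapHom φ f) = MvPolynomial.map φ (PolyEnd.jac f) := by
  unfold PolyEnd.jac
  have : (Matrix.of fun i j => pderiv j ((endMapHom φ f) i))
      = (Matrix.of fun i j => pderiv j (f i)).map (MvPolynomial.map φ) :=
    Matrix.ext fun i j => by
      show pderiv j (MvPolynomial.map φ (f i)) = MvPolynomial.map φ (pderiv j (f i))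
      exact pderiv_map
  rw [this, RingHom.map_det]
  rfl

/-- Specialisation of an automorphism over `R[t]` at a value `t₀ ∈ R`. -/
noncomputable def specAut (t0 : R) : PolyAut (Polynomial R) n →* PolyAut R n :=
  autMap (Polynomial.evalRingHom t0)

lemma specAut_mem_SAutGrp (h : PolyAut (Polynomial R) n)
    (hh : h ∈ SAutGrp (Polynomial R) n) (t0 : R) :
    specAut t0 h ∈ SAutGrp R n := by
  show PolyEnd.jac ((specAut t0 h).val) = 1
  have : (specAut t0 h).val = endMapHom (Polynomial.evalRingHom t0) h.val := rfl
  rw [this, jac_endMapHom, hh, map_one]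

/-- Specialisation, from `SAut` over `R[t]` to `SAut` over `R`. -/
noncomputable def specSAut (t0 : R) (h : PolyAut (Polynomial R) n)
    (hh : h ∈ SAutGrp (Polynomial R) n) : ↥(SAutGrp R n) :=
  ⟨specAut t0 h, specAut_mem_SAutGrp h hh t0⟩

/-- A subgroup `N` of `SAut_k(𝔸ⁿ)` is closed under specialisation if for every
automorphism `h` over `k[t]` of Jacobian `1` all of whose specialisations at
`t₀ ≠ 0` lie in `N`, the specialisation at `0` also lies in `N`. Every subgroup
that is closed in the ind-topology has this property. -/
def ClosedUnderSpec {R : Type*} [CommRing R] {n : ℕ} (N : Subgroup ↥(SAutGrp R n)) : Prop :=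
  ∀ (h : PolyAut (Polynomial R) n) (hh : h ∈ SAutGrp (Polynomial R) n),
    (∀ t0 : R, t0 ≠ 0 → specSAut t0 h hh ∈ N) → specSAut 0 h hh ∈ N

/-- A subgroup `N` of `Aut_k(𝔸ⁿ)` is closed under specialisation if for every
automorphism `h` over `k[t]` all of whose specialisations at `t₀ ≠ 0` lie in `N`,
the specialisation at `0` also lies in `N`. -/
def ClosedUnderSpecAut {R : Type*} [CommRing R] {n : ℕ} (N : Subgroup (PolyAut R n)) : Prop :=
  ∀ h : PolyAut (Polynomial R) n,
    (∀ t0 : R, t0 ≠ 0 → specAut t0 h ∈ N) → specAut 0 h ∈ N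

end Map

/-! An endomorphism commuting with the translation by `c` satisfies `f(x + c) = f(x) + c`;
at `x = 0` this says that `f` and the translation by `f(0)` agree as maps `Rⁿ → Rⁿ`, and over
an infinite domain a polynomial map determines its polynomials. -/

namespace PolyEnd

variable {R : Type*} [CommRing R] {n : ℕ}

noncomputable def toFun (f : PolyEnd R n) (x : Fin n → R) : Fin n → R :=
  fun i => eval x (f i)

lemma toFun_mul (f g : PolyEnd R n) : (f * g).toFun = f.toFun ∘ g.toFun := by
  funext x i
  exact aeval_bind₁ x g (f i)

lemma toFun_translEnd (c : Fin n → R) : (translEnd c).toFun = (· + c) := by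
  funext x i
  simp [toFun, translEnd]

lemma toFun_injective [IsDomain R] [Infinite R] :
    Function.Injective (toFun : PolyEnd R n → (Fin n → R) → Fin n → R) :=
  fun _ _ h => funext fun i => MvPolynomial.funext fun x => congrFun (congrFun h x) i

end PolyEnd

theorem eq_translEnd_of_commute_translations_general {R : Type*} [CommRing R] [IsDomain R] [Infinite R]
    {n : ℕ} (f : PolyEnd R n)
    (hf : ∀ c : Fin n → R, f * translEnd c = translEnd c * f) :
    ∃ c : Fin n → R, f = translEnd c := by
  have toFun_eq : ∀ c, f.toFun c = f.toFun 0 + c := fun c => by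
    simpa [PolyEnd.toFun_mul, PolyEnd.toFun_translEnd] using
      congrFun (congrArg PolyEnd.toFun (hf c)) 0
  refine ⟨f.toFun 0, PolyEnd.toFun_injective (funext fun c => ?_)⟩
  rw [toFun_eq, PolyEnd.toFun_translEnd, add_comm]

/-- **Lemma.**  Over an infinite integral domain, an endomorphism of `𝔸ⁿ` commuting with all
translations is itself a translation: the translations form their own centraliser in
`End_R(𝔸ⁿ)`. -/
theorem eq_translEnd_of_commute_translations {R : Type*} [CommRing R] [IsDomain R] [Infinite R]
    {n : ℕ} (hn : 1 ≤ n) (f : PolyEnd R n)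
    (hf : ∀ c : Fin n → R, f * translEnd c = translEnd c * f) :
    ∃ c : Fin n → R, f = translEnd c :=
  eq_translEnd_of_commute_translations_general f hf
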